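/- arXiv:1701.00429 — 2 statements merged into one kernel-verified Lean document; each statement's English description precedes it below -/
import Mathlib

section
/- If 0 ≤ p' < p ≤ n and d(p') ≠ d(p) (two undefined values counting as equal, an undefined and a defined value as distinct), then there exists an index j with p' < t_j ≤ p. Consequently, for every p and every i with i + 2 ≤ l_p there exists t ∈ T with a_{i+1}^{(p)} < t ≤ a_i^{(p)}. -/
/-- `d(p) = max { s j : t j ≤ p }`, with `⊥` meaning "undefined" (i.e. `-∞`). -/
noncomputable def dvalue (m : ℕ) (s t : ℕ → ℤ) (p : ℤ) : WithBot ℤ :=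
  ((Finset.range m).filter (fun j => t j ≤ p)).sup (fun j => (s j : WithBot ℤ))

/-- `d†(p) = min { t j : s j ≥ p }`, with `⊤` meaning "undefined" (i.e. `+∞`). -/
noncomputable def ddual (m : ℕ) (s t : ℕ → ℤ) (p : ℤ) : WithTop ℤ :=
  ((Finset.range m).filter (fun j => p ≤ s j)).inf (fun j => (t j : WithTop ℤ))

/-- The extension of `d` to `WithBot ℤ`, sending `⊥` to `⊥`. -/
noncomputable def dW (m : ℕ) (s t : ℕ → ℤ) : WithBot ℤ → WithBot ℤ :=
  WithBot.recBotCoe ⊥ (dvalue m s t)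

/-- The extension of `d†` to `WithTop ℤ`, sending `⊤` to `⊤`. -/
noncomputable def dtW (m : ℕ) (s t : ℕ → ℤ) : WithTop ℤ → WithTop ℤ :=
  WithTop.recTopCoe ⊤ (ddual m s t)

/-- The (total extension of the) sequence `a_i^{(p)}`:
`a_0 = p`, `a_1 = p - 1`, `a_{i+2} = d(a_i)`.  For `i ≤ l_p` this agrees with the
sequence of the paper. -/
noncomputable def aSeq (m : ℕ) (s t : ℕ → ℤ) (p : ℤ) : ℕ → WithBot ℤ
  | 0 => (p : WithBot ℤ)
  | 1 => ((p - 1 : ℤ) : WithBot ℤ)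
  | i + 2 => dW m s t (aSeq m s t p i)

/-- The length `l_p`: `l_0 = 0`, and for `p ≠ 0` it is the least `j ≥ 1` with
`d(a_{j-1}^{(p)}) = d(a_j^{(p)})` (undefined values compared as `⊥`). -/
noncomputable def lSeq (m : ℕ) (s t : ℕ → ℤ) (p : ℤ) : ℕ :=
  if p = 0 then 0
  else sInf {j : ℕ | 1 ≤ j ∧ dW m s t (aSeq m s t p (j - 1)) = dW m s t (aSeq m s t p j)}

/-- The (total extension of the) dual sequence `a_i^{(p)†}`:
`a_0 = p`, `a_1 = p + 1`, `a_{i+2} = d†(a_i)`. -/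
noncomputable def aSeqD (m : ℕ) (s t : ℕ → ℤ) (p : ℤ) : ℕ → WithTop ℤ
  | 0 => (p : WithTop ℤ)
  | 1 => ((p + 1 : ℤ) : WithTop ℤ)
  | i + 2 => dtW m s t (aSeqD m s t p i)

/-- The dual length `l_p†`: `l_n† = 0`, and for `p ≠ n` it is the least `j ≥ 1` with
`d†(a_{j-1}^{(p)†}) = d†(a_j^{(p)†})` (undefined values compared as `⊤`). -/
noncomputable def lSeqD (n : ℤ) (m : ℕ) (s t : ℕ → ℤ) (p : ℤ) : ℕ :=
  if p = n then 0
  else sInf {j : ℕ | 1 ≤ j ∧ dtW m s t (aSeqD m s t p (j - 1)) = dtW m s t (aSeqD m s t p j)}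

/-!
On `WithBot ℤ`, `d a` is the supremum of the `s j` over the intervals with `t j ≤ a`, so `d` is
monotone and can change between `a ≤ b` only if some `t j` lies in `(a, b]`. Below `l_p`
consecutive values of `d` along `a^{(p)}` differ, so `d` turns `a_{i+1} < a_i` into
`a_{i+3} < a_{i+2}`; the sequence starts decreasing because `d(p) ≤ p - 2 < p - 1`.
-/

open Finset

section

variable {m : ℕ} {s t : ℕ → ℤ}

theorem dW_eq_sup (a : WithBot ℤ) :
    dW m s t a =
      ((range m).filter (fun j => (t j : WithBot ℤ) ≤ a)).sup (fun j => (s j : WithBot ℤ)) := by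
  induction a using WithBot.recBotCoe with
  | bot => simp [dW]
  | coe p => simp [dW, dvalue]

theorem dW_mono : Monotone (dW m s t) := by
  intro a b hab
  rw [dW_eq_sup, dW_eq_sup]
  exact sup_mono (monotone_filter_right _ fun _ _ hj => hj.trans hab)

theorem exists_t_between_of_dW_ne {a b : WithBot ℤ} (hab : a ≤ b) (hne : dW m s t a ≠ dW m s t b) :
    ∃ j < m, a < t j ∧ (t j : WithBot ℤ) ≤ b := by
  by_contra! h
  refine hne ?_
  rw [dW_eq_sup, dW_eq_sup]
  congr 1
  ext j
  simp only [mem_filter, mem_range, and_congr_right_iff]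
  exact fun hj => ⟨fun hja => hja.trans hab, fun hjb => not_lt.1 fun hja => (h j hj hja).not_ge hjb⟩

theorem dvalue_le_sub_two (hlen : ∀ j : ℕ, j < m → s j + 2 ≤ t j) (p : ℤ) :
    dvalue m s t p ≤ ((p - 2 : ℤ) : WithBot ℤ) := by
  refine Finset.sup_le fun j hj => ?_
  simp only [mem_filter, mem_range] at hj
  have := hlen j hj.1
  exact WithBot.coe_le_coe.2 (by omega)

theorem dW_aSeq_ne_of_lt_lSeq {p : ℤ} {j : ℕ} (hj : j + 1 < lSeq m s t p) :
    dW m s t (aSeq m s t p j) ≠ dW m s t (aSeq m s t p (j + 1)) := by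
  intro heq
  unfold lSeq at hj
  split_ifs at hj
  · omega
  · exact hj.not_ge (Nat.sInf_le ⟨Nat.le_add_left 1 j, heq⟩)

theorem aSeq_succ_lt_of_lt_lSeq (hlen : ∀ j : ℕ, j < m → s j + 2 ≤ t j) (p : ℤ) :
    ∀ i, i + 1 < lSeq m s t p → aSeq m s t p (i + 1) < aSeq m s t p i
  | 0, _ => WithBot.coe_lt_coe.2 (by omega)
  | 1, _ => (dvalue_le_sub_two hlen p).trans_lt (WithBot.coe_lt_coe.2 (by omega))
  | k + 2, hk =>
    (dW_mono (aSeq_succ_lt_of_lt_lSeq hlen p k (by omega)).le).lt_of_ne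
      (dW_aSeq_ne_of_lt_lSeq (by omega)).symm

end

theorem exists_t_between_general
    (n : ℤ) (m : ℕ) (s t : ℕ → ℤ)
    (hlen : ∀ j : ℕ, j < m → s j + 2 ≤ t j) :
    (∀ p' p : ℤ, 0 ≤ p' → p' < p → p ≤ n → dvalue m s t p' ≠ dvalue m s t p →
      ∃ j : ℕ, j < m ∧ p' < t j ∧ t j ≤ p) ∧
    (∀ p : ℤ, 0 ≤ p → p ≤ n → ∀ i : ℕ, i + 2 ≤ lSeq m s t p →
      ∃ j : ℕ, j < m ∧ aSeq m s t p (i + 1) < (t j : WithBot ℤ) ∧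
        (t j : WithBot ℤ) ≤ aSeq m s t p i) := by
  refine ⟨fun p' p _ hlt _ hne => ?_, fun p _ _ i hi => ?_⟩
  · obtain ⟨j, hj, hp'j, hjp⟩ :=
      exists_t_between_of_dW_ne (m := m) (WithBot.coe_le_coe.2 hlt.le) hne
    exact ⟨j, hj, WithBot.coe_lt_coe.1 hp'j, WithBot.coe_le_coe.1 hjp⟩
  · exact exists_t_between_of_dW_ne (aSeq_succ_lt_of_lt_lSeq hlen p i hi).le
      (dW_aSeq_ne_of_lt_lSeq hi).symm

theorem exists_t_between
    (n : ℤ) (m : ℕ) (s t : ℕ → ℤ)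
    (hn : 0 ≤ n)
    (hsmono : ∀ i j : ℕ, i < j → j < m → s i < s j)
    (htmono : ∀ i j : ℕ, i < j → j < m → t i < t j)
    (hs0 : ∀ j : ℕ, j < m → 0 ≤ s j)
    (htn : ∀ j : ℕ, j < m → t j ≤ n)
    (hlen : ∀ j : ℕ, j < m → s j + 2 ≤ t j) :
    (∀ p' p : ℤ, 0 ≤ p' → p' < p → p ≤ n → dvalue m s t p' ≠ dvalue m s t p →
      ∃ j : ℕ, j < m ∧ p' < t j ∧ t j ≤ p) ∧
    (∀ p : ℤ, 0 ≤ p → p ≤ n → ∀ i : ℕ, i + 2 ≤ lSeq m s t p →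
      ∃ j : ℕ, j < m ∧ aSeq m s t p (i + 1) < (t j : WithBot ℤ) ∧
        (t j : WithBot ℤ) ≤ aSeq m s t p i) :=
  exists_t_between_general n m s t hlen
end

section
/- For every integer p with 0 ≤ p ≤ n − 1: l_p† ≥ 2 if and only if p ∈ S; and when this is the case, there exists an index j with s_j = p and t_j = a_2^{(p)†} = d†(p), so the pair (p, d†(p)) is one of the given relation intervals [s_j, t_j]. -/
/-!
Comparing the filters `p ≤ s j` and `p + 1 ≤ s j` shows that `d†(p)` and `d†(p + 1)` differ
exactly when some `s j = p`, and then `d†(p) = t j` because the intervals are ordered.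
Since every interval has length at least `2`, the sequence `a^{(p)†}` grows by at least `2` every
two steps, so it eventually passes `n - 1`, beyond which `d†` is undefined; hence the index
defining `l_p†` exists, and `l_p† ≥ 2` says precisely that the first comparison fails.
-/

section

variable {m : ℕ} {s t : ℕ → ℤ}

@[simp] lemma dtW_coe (q : ℤ) : dtW m s t q = ddual m s t q := rfl

lemma ddual_eq_of_s_eq (hsmono : ∀ i j : ℕ, i < j → j < m → s i < s j)
    (htmono : ∀ i j : ℕ, i < j → j < m → t i < t j) {p : ℤ} {j : ℕ} (hj : j < m)
    (hjs : s j = p) : ddual m s t p = t j := by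
  refine le_antisymm (Finset.inf_le (by simp [hj, hjs.ge])) (Finset.le_inf fun k hk => ?_)
  simp only [Finset.mem_filter, Finset.mem_range] at hk
  rcases lt_trichotomy k j with hkj | rfl | hjk
  · exact absurd (hsmono k j hkj hj) (by omega)
  · exact le_rfl
  · exact_mod_cast (htmono j k hjk hk.1).le

lemma lt_ddual_succ_of_s_eq (hsmono : ∀ i j : ℕ, i < j → j < m → s i < s j)
    (htmono : ∀ i j : ℕ, i < j → j < m → t i < t j) {p : ℤ} {j : ℕ} (hj : j < m)
    (hjs : s j = p) : (t j : WithTop ℤ) < ddual m s t (p + 1) := by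
  refine (Finset.lt_inf_iff (WithTop.coe_lt_top _)).2 fun k hk => ?_
  simp only [Finset.mem_filter, Finset.mem_range] at hk
  have hjk : j < k := by
    by_contra! hkj
    rcases hkj.lt_or_eq with hkj | rfl
    · exact absurd (hsmono k j hkj hj) (by omega)
    · omega
  exact_mod_cast htmono j k hjk hk.1

lemma ddual_succ_eq_of_forall_s_ne {p : ℤ} (h : ∀ j, j < m → s j ≠ p) :
    ddual m s t (p + 1) = ddual m s t p := by
  refine congrArg (Finset.inf · _) (Finset.filter_congr fun k hk => ?_)
  have := h k (Finset.mem_range.1 hk)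
  omega

lemma ddual_ne_ddual_succ_iff (hsmono : ∀ i j : ℕ, i < j → j < m → s i < s j)
    (htmono : ∀ i j : ℕ, i < j → j < m → t i < t j) {p : ℤ} :
    ddual m s t p ≠ ddual m s t (p + 1) ↔ ∃ j, j < m ∧ s j = p := by
  constructor
  · intro hne
    by_contra! h
    exact hne (ddual_succ_eq_of_forall_s_ne h).symm
  · rintro ⟨j, hj, hjs⟩
    rw [ddual_eq_of_s_eq hsmono htmono hj hjs]
    exact (lt_ddual_succ_of_s_eq hsmono htmono hj hjs).ne

lemma add_two_le_dtW (hlen : ∀ j : ℕ, j < m → s j + 2 ≤ t j) {c : ℤ} {x : WithTop ℤ}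
    (hx : (c : WithTop ℤ) ≤ x) : ((c + 2 : ℤ) : WithTop ℤ) ≤ dtW m s t x := by
  induction x using WithTop.recTopCoe with
  | top => exact le_top
  | coe q =>
    rw [dtW_coe]
    refine Finset.le_inf fun k hk => ?_
    simp only [Finset.mem_filter, Finset.mem_range] at hk
    have hcq : c ≤ q := by exact_mod_cast hx
    have := hlen k hk.1
    exact_mod_cast (by omega : c + 2 ≤ t k)

lemma dtW_eq_top_of_le (n : ℤ) (htn : ∀ j : ℕ, j < m → t j ≤ n)
    (hlen : ∀ j : ℕ, j < m → s j + 2 ≤ t j) {x : WithTop ℤ}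
    (hx : ((n - 1 : ℤ) : WithTop ℤ) ≤ x) : dtW m s t x = ⊤ := by
  induction x using WithTop.recTopCoe with
  | top => rfl
  | coe q =>
    have hq : n - 1 ≤ q := by exact_mod_cast hx
    rw [dtW_coe]
    refine (Finset.inf_eq_top_iff _ _).2 fun k hk => ?_
    simp only [Finset.mem_filter, Finset.mem_range] at hk
    have := htn k hk.1
    have := hlen k hk.1
    omega

lemma le_aSeqD (hlen : ∀ j : ℕ, j < m → s j + 2 ≤ t j) (p : ℤ) :
    ∀ i : ℕ, ((p - 1 + i : ℤ) : WithTop ℤ) ≤ aSeqD m s t p i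
  | 0 => WithTop.coe_le_coe.2 (by omega)
  | 1 => WithTop.coe_le_coe.2 (by omega)
  | i + 2 => by
    have h := add_two_le_dtW hlen (le_aSeqD hlen p i)
    rwa [show p - 1 + (i : ℤ) + 2 = p - 1 + ((i + 2 : ℕ) : ℤ) by push_cast; ring] at h

lemma exists_dtW_aSeqD_pred_eq (n : ℤ) (htn : ∀ j : ℕ, j < m → t j ≤ n)
    (hlen : ∀ j : ℕ, j < m → s j + 2 ≤ t j) (p : ℤ) :
    ∃ j : ℕ, 1 ≤ j ∧ dtW m s t (aSeqD m s t p (j - 1)) = dtW m s t (aSeqD m s t p j) := by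
  have hend : ∀ i : ℕ, n - p ≤ i → dtW m s t (aSeqD m s t p i) = ⊤ := fun i hi =>
    dtW_eq_top_of_le n htn hlen <| (WithTop.coe_le_coe.2 (by omega)).trans (le_aSeqD hlen p i)
  refine ⟨(n - p).toNat + 1, by omega, ?_⟩
  rw [hend _ (by simp), hend _ (by push_cast; omega)]

lemma two_le_lSeqD_iff {n p : ℤ} (hpn : p ≠ n)
    (hstop : ∃ j : ℕ, 1 ≤ j ∧ dtW m s t (aSeqD m s t p (j - 1)) = dtW m s t (aSeqD m s t p j)) :
    2 ≤ lSeqD n m s t p ↔ ddual m s t p ≠ ddual m s t (p + 1) := by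
  rw [lSeqD, if_neg hpn]
  constructor
  · exact fun h2 heq => absurd h2 (not_le.2 (Nat.lt_succ_of_le (Nat.sInf_le ⟨le_rfl, heq⟩)))
  · intro hne
    refine le_csInf hstop fun b ⟨hb1, hb⟩ => ?_
    by_contra! hb2
    obtain rfl : b = 1 := by omega
    exact hne hb

end

theorem lpdual_ge_two_iff_mem_S_general
    (n : ℤ) (m : ℕ) (s t : ℕ → ℤ)
    (hsmono : ∀ i j : ℕ, i < j → j < m → s i < s j)
    (htmono : ∀ i j : ℕ, i < j → j < m → t i < t j)
    (htn : ∀ j : ℕ, j < m → t j ≤ n)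
    (hlen : ∀ j : ℕ, j < m → s j + 2 ≤ t j)
    (p : ℤ) (hpn : p ≤ n - 1) :
    (2 ≤ lSeqD n m s t p ↔ ∃ j : ℕ, j < m ∧ s j = p) ∧
    (2 ≤ lSeqD n m s t p →
      ∃ j : ℕ, j < m ∧ s j = p ∧ (t j : WithTop ℤ) = aSeqD m s t p 2 ∧
        (t j : WithTop ℤ) = ddual m s t p) := by
  have hiff : 2 ≤ lSeqD n m s t p ↔ ∃ j : ℕ, j < m ∧ s j = p :=
    (two_le_lSeqD_iff (by omega) (exists_dtW_aSeqD_pred_eq n htn hlen p)).trans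
      (ddual_ne_ddual_succ_iff hsmono htmono)
  refine ⟨hiff, fun h2 => ?_⟩
  obtain ⟨j, hj, hjs⟩ := hiff.1 h2
  have hdp : ddual m s t p = t j := ddual_eq_of_s_eq hsmono htmono hj hjs
  exact ⟨j, hj, hjs, hdp.symm, hdp.symm⟩

theorem lpdual_ge_two_iff_mem_S
    (n : ℤ) (m : ℕ) (s t : ℕ → ℤ)
    (hn : 0 ≤ n)
    (hsmono : ∀ i j : ℕ, i < j → j < m → s i < s j)
    (htmono : ∀ i j : ℕ, i < j → j < m → t i < t j)
    (hs0 : ∀ j : ℕ, j < m → 0 ≤ s j)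
    (htn : ∀ j : ℕ, j < m → t j ≤ n)
    (hlen : ∀ j : ℕ, j < m → s j + 2 ≤ t j)
    (p : ℤ) (hp0 : 0 ≤ p) (hpn : p ≤ n - 1) :
    (2 ≤ lSeqD n m s t p ↔ ∃ j : ℕ, j < m ∧ s j = p) ∧
    (2 ≤ lSeqD n m s t p →
      ∃ j : ℕ, j < m ∧ s j = p ∧ (t j : WithTop ℤ) = aSeqD m s t p 2 ∧
        (t j : WithTop ℤ) = ddual m s t p) :=
  lpdual_ge_two_iff_mem_S_general n m s t hsmono htmono htn hlen p hpn
end
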